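/- Let α ∈ (−1,0) be fixed and let c > 0. There exists a constant C depending only on α and c such that for every integer n ≥ 1 and every λ > 0 with λn ≤ c, the clique infection chain on {0,…,n} with parameters λ, α, started at X₀ = 1, has expected survival time E[T] ≤ C. In particular, if λ(n)·n = O(1) then E[T_n] = O(1). -/

import Mathlib

open scoped ENNReal
open Filter Asymptotics

noncomputable def markovDist {S : Type*} [DecidableEq S] (step : S → S → ℝ≥0∞) (s0 : S) :
    ℕ → S → ℝ≥0∞
  | 0 => fun J => if J = s0 then 1 else 0
  | t + 1 => fun J => ∑' s : S, markovDist step s0 t s * step s J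

open Classical in
noncomputable def absorbStep {S : Type*} (A : Set S) (step : S → S → ℝ≥0∞) :
    S → S → ℝ≥0∞ :=
  fun s => if s ∈ A then (fun J => if J = s then 1 else 0) else step s

noncomputable def hitProb {S : Type*} [DecidableEq S] (step : S → S → ℝ≥0∞) (s0 : S)
    (A : Set S) : ℝ≥0∞ :=
  ⨆ t : ℕ, ∑' s : S, A.indicator (markovDist (absorbStep A step) s0 t) s

noncomputable def cliqueStep (n : ℕ) (lam alpha : ℝ) (I : ℕ) : ℕ → ℝ≥0∞ :=
  if I = 0 ∨ n < I then fun J => if J = I then 1 else 0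
  else fun J =>
    if J = I + 1 then
      ENNReal.ofReal (lam * (I : ℝ) ^ (1 + alpha) * ((n : ℝ) - I) /
        (lam * (I : ℝ) ^ (1 + alpha) * ((n : ℝ) - I) + I))
    else if J = I - 1 then
      ENNReal.ofReal ((I : ℝ) /
        (lam * (I : ℝ) ^ (1 + alpha) * ((n : ℝ) - I) + I))
    else 0

noncomputable def cliqueDist (n : ℕ) (lam alpha : ℝ) (x0 : ℕ) : ℕ → ℕ → ℝ≥0∞ :=
  markovDist (cliqueStep n lam alpha) x0

noncomputable def cliqueET (n : ℕ) (lam alpha : ℝ) (x0 : ℕ) : ℝ≥0∞ :=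
  ∑' t : ℕ, (1 - cliqueDist n lam alpha x0 t 0)

/-!
Foster–Lyapunov argument. If `F ≥ 0` satisfies `P F + δ · 1[s ≠ 0] ≤ F` for the transition
operator `P`, then `E F(X_{t+1}) + δ P(X_t ≠ 0) ≤ E F(X_t)`, and telescoping gives
`δ E[T] ≤ F(X_0)`. On the clique `b(s) ≤ s · c s^α` whenever `λ n ≤ c`, so for
`F(s) = d(1) + ⋯ + d(s)` and `δ = (c + 1)⁻¹` the drift condition reduces to
`c s^α d(s+1) + 1 ≤ d(s)`. As `α < 0`, `c s^α ≤ 1/2` beyond some `N` depending only on `c`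
and `α`; there `d = 2` works, and below `N` one solves the recursion backwards. Hence
`E[T] ≤ (c + 1) d(1)`.
-/

section MarkovChain

variable {S : Type*} [DecidableEq S] (step : S → S → ℝ≥0∞) (s0 : S)

theorem tsum_markovDist_succ_mul (F : S → ℝ≥0∞) (t : ℕ) :
    ∑' s, markovDist step s0 (t + 1) s * F s =
      ∑' u, markovDist step s0 t u * ∑' s, step u s * F s := by
  simp only [markovDist, ← ENNReal.tsum_mul_right, ← ENNReal.tsum_mul_left, mul_assoc]
  exact ENNReal.tsum_comm

theorem tsum_markovDist_eq_one (hstep : ∀ s, ∑' J, step s J = 1) (t : ℕ) :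
    ∑' s, markovDist step s0 t s = 1 := by
  induction t with
  | zero => simp [markovDist]
  | succ t ih => simpa [hstep, ih] using tsum_markovDist_succ_mul step s0 (fun _ => 1) t

theorem tsum_markovDist_mul_add_sum_le (F g : S → ℝ≥0∞)
    (hdrift : ∀ s, ∑' J, step s J * F J + g s ≤ F s) (t : ℕ) :
    ∑' s, markovDist step s0 t s * F s +
      ∑ k ∈ Finset.range t, ∑' s, markovDist step s0 k s * g s ≤ F s0 := by
  induction t with
  | zero => simp [markovDist]
  | succ t ih =>
    have hstep : ∑' s, markovDist step s0 (t + 1) s * F s +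
        ∑' s, markovDist step s0 t s * g s ≤ ∑' s, markovDist step s0 t s * F s := by
      rw [tsum_markovDist_succ_mul, ← ENNReal.tsum_add]
      exact ENNReal.tsum_le_tsum fun u => by
        rw [← mul_add]; gcongr; exact hdrift u
    calc _ = (∑' s, markovDist step s0 (t + 1) s * F s +
            ∑' s, markovDist step s0 t s * g s) +
          ∑ k ∈ Finset.range t, ∑' s, markovDist step s0 k s * g s := by
          rw [Finset.sum_range_succ]; ring
      _ ≤ F s0 := (add_le_add_left hstep _).trans ih

theorem tsum_one_sub_markovDist_le_div (hstep : ∀ s, ∑' J, step s J = 1) (a : S)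
    (F : S → ℝ≥0∞) {δ : ℝ≥0∞} (hδ : δ ≠ 0) (hδ_top : δ ≠ ⊤)
    (hdrift : ∀ s, ∑' J, step s J * F J + (if s = a then 0 else δ) ≤ F s) :
    ∑' t, (1 - markovDist step s0 t a) ≤ F s0 / δ := by
  have hmiss (t : ℕ) : δ * (1 - markovDist step s0 t a) ≤
      ∑' s, markovDist step s0 t s * if s = a then 0 else δ := by
    have hmass := tsum_markovDist_eq_one step s0 hstep t
    rw [ENNReal.tsum_eq_add_tsum_ite a] at hmass
    calc δ * (1 - markovDist step s0 t a)
        ≤ δ * ∑' s, (if s = a then 0 else markovDist step s0 t s) := by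
          gcongr; rw [tsub_le_iff_left]; convert hmass.ge
      _ = _ := by
          rw [← ENNReal.tsum_mul_left]; congr 1; funext s; split_ifs <;> simp [mul_comm]
  rw [ENNReal.le_div_iff_mul_le (Or.inl hδ) (Or.inl hδ_top), mul_comm,
    ENNReal.tsum_eq_iSup_nat, ENNReal.mul_iSup]
  refine iSup_le fun t => ?_
  rw [Finset.mul_sum]
  exact ((Finset.sum_le_sum fun k _ => hmiss k).trans le_add_self).trans
    (tsum_markovDist_mul_add_sum_le step s0 F _ hdrift t)

end MarkovChain

theorem exists_nonneg_mul_succ_add_one_le {r : ℕ → ℝ} (hr0 : ∀ s, 0 ≤ r s) (N : ℕ)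
    (hN : ∀ s, N ≤ s → r s ≤ 1 / 2) :
    ∃ d : ℕ → ℝ, (∀ s, 0 ≤ d s) ∧ ∀ s, r s * d (s + 1) + 1 ≤ d s := by
  induction N generalizing r with
  | zero => exact ⟨fun _ => 2, fun _ => by norm_num, fun s => by linarith [hN s s.zero_le]⟩
  | succ N ih =>
    obtain ⟨d, hd0, hd⟩ := ih (r := fun s => r (s + 1)) (fun s => hr0 _)
      (fun s hs => hN _ (by omega))
    refine ⟨fun | 0 => r 0 * d 0 + 1 | s + 1 => d s, ?_, ?_⟩
    · rintro (_ | s)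
      · have := mul_nonneg (hr0 0) (hd0 0); dsimp only; linarith
      · exact hd0 s
    · rintro (_ | s)
      · exact le_rfl
      · exact hd s

theorem birthDeath_drift_le {b s r c d d' F : ℝ} (hs : 0 < s) (hb : 0 ≤ b) (hbr : b ≤ s * r)
    (hrc : r ≤ c) (hd' : 0 ≤ d') (hd : r * d' + 1 ≤ d) :
    b / (b + s) * (F + d') + s / (b + s) * (F - d) + (c + 1)⁻¹ ≤ F := by
  have hr : 0 ≤ r := nonneg_of_mul_nonneg_right (hb.trans hbr) hs
  have hbs : 0 < b + s := by linarith
  have hδ : (b + s) * (c + 1)⁻¹ ≤ s := by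
    rw [← div_eq_mul_inv, div_le_iff₀ (by linarith)]; nlinarith
  have hbd' : b * d' ≤ s * (r * d') := by nlinarith
  rw [div_mul_eq_mul_div, div_mul_eq_mul_div, ← add_div, div_add' _ _ _ hbs.ne',
    div_le_iff₀ hbs]
  nlinarith

noncomputable def cliqueBirth (n : ℕ) (lam alpha : ℝ) (I : ℕ) : ℝ :=
  lam * (I : ℝ) ^ (1 + alpha) * ((n : ℝ) - I)

/-- Taking the value `⊤` beyond `n` makes the drift inequality trivial there; the chain never
gets there, since from `n` it moves up with probability `0` and `0 * ⊤ = 0`. -/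
noncomputable def cliqueLyapunov (n : ℕ) (d : ℕ → ℝ) (s : ℕ) : ℝ≥0∞ :=
  if s ≤ n then ENNReal.ofReal (∑ k ∈ Finset.range s, d (k + 1)) else ⊤

section CliqueChain

variable {n : ℕ} {lam alpha : ℝ}

theorem cliqueBirth_nonneg (hlam : 0 ≤ lam) {I : ℕ} (hI : I ≤ n) :
    0 ≤ cliqueBirth n lam alpha I := by
  have : (I : ℝ) ≤ n := by exact_mod_cast hI
  unfold cliqueBirth; have := sub_nonneg.2 this; positivity

theorem cliqueBirth_le {c : ℝ} (hlam : 0 ≤ lam) (hln : lam * n ≤ c) {I : ℕ}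
    (hI1 : 1 ≤ I) : cliqueBirth n lam alpha I ≤ I * (c * (I : ℝ) ^ alpha) := by
  have hI0 : (0 : ℝ) < I := by exact_mod_cast hI1
  have hIα : 0 ≤ (I : ℝ) * (I : ℝ) ^ alpha := by positivity
  have hnI : lam * ((n : ℝ) - I) ≤ c := by nlinarith
  calc cliqueBirth n lam alpha I = lam * ((n : ℝ) - I) * ((I : ℝ) * (I : ℝ) ^ alpha) := by
        rw [cliqueBirth, Real.rpow_add hI0, Real.rpow_one]; ring
    _ ≤ c * ((I : ℝ) * (I : ℝ) ^ alpha) := by gcongr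
    _ = I * (c * (I : ℝ) ^ alpha) := by ring

theorem tsum_cliqueStep_mul_of_absorbing {s : ℕ} (hs : s = 0 ∨ n < s) (F : ℕ → ℝ≥0∞) :
    ∑' J, cliqueStep n lam alpha s J * F J = F s := by
  simp [cliqueStep, hs]

theorem tsum_cliqueStep_mul {s : ℕ} (hs1 : 1 ≤ s) (hsn : s ≤ n) (F : ℕ → ℝ≥0∞) :
    ∑' J, cliqueStep n lam alpha s J * F J =
      ENNReal.ofReal (cliqueBirth n lam alpha s / (cliqueBirth n lam alpha s + s)) * F (s + 1) +
        ENNReal.ofReal (s / (cliqueBirth n lam alpha s + s)) * F (s - 1) := by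
  rw [tsum_eq_sum (s := {s + 1, s - 1}), Finset.sum_pair (by omega)]
  · simp [cliqueStep, cliqueBirth, show s ≠ 0 by omega, hsn.not_gt,
      show s - 1 ≠ s + 1 by omega]
  · intro J hJ
    simp only [Finset.mem_insert, Finset.mem_singleton, not_or] at hJ
    simp [cliqueStep, show ¬(s = 0 ∨ n < s) by omega, hJ.1, hJ.2]

theorem tsum_cliqueStep_eq_one (hlam : 0 ≤ lam) (s : ℕ) :
    ∑' J, cliqueStep n lam alpha s J = 1 := by
  by_cases hs : s = 0 ∨ n < s
  · simpa using tsum_cliqueStep_mul_of_absorbing (lam := lam) (alpha := alpha) hs (fun _ => 1)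
  simp only [not_or, not_lt] at hs
  have hb := cliqueBirth_nonneg (alpha := alpha) hlam hs.2
  have hs0 : (0 : ℝ) < s := by exact_mod_cast Nat.pos_of_ne_zero hs.1
  have := tsum_cliqueStep_mul (lam := lam) (alpha := alpha) (by omega) hs.2 (fun _ => 1)
  simp only [mul_one] at this
  rw [this, ← ENNReal.ofReal_add (by positivity) (by positivity), ← add_div,
    div_self (by positivity), ENNReal.ofReal_one]

theorem ofReal_mul_cliqueLyapunov_succ (hlam : 0 ≤ lam) (d : ℕ → ℝ) {s : ℕ}
    (hsn : s ≤ n) :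
    ENNReal.ofReal (cliqueBirth n lam alpha s / (cliqueBirth n lam alpha s + s)) *
        cliqueLyapunov n d (s + 1) =
      ENNReal.ofReal (cliqueBirth n lam alpha s / (cliqueBirth n lam alpha s + s) *
        ∑ k ∈ Finset.range (s + 1), d (k + 1)) := by
  have hb := cliqueBirth_nonneg (alpha := alpha) hlam hsn
  by_cases hs : s + 1 ≤ n
  · rw [cliqueLyapunov, if_pos hs, ENNReal.ofReal_mul (by positivity)]
  · have hb0 : cliqueBirth n lam alpha s = 0 := by simp [cliqueBirth, show s = n by omega]
    simp [hb0]

theorem cliqueStep_drift {c : ℝ} (hlam : 0 ≤ lam) (halpha : alpha ≤ 0)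
    (hln : lam * n ≤ c) {d : ℕ → ℝ} (hd0 : ∀ s, 0 ≤ d s)
    (hd : ∀ s : ℕ, c * (s : ℝ) ^ alpha * d (s + 1) + 1 ≤ d s) (s : ℕ) :
    ∑' J, cliqueStep n lam alpha s J * cliqueLyapunov n d J +
        (if s = 0 then 0 else ENNReal.ofReal (c + 1)⁻¹) ≤ cliqueLyapunov n d s := by
  by_cases hs : s = 0 ∨ n < s
  · rw [tsum_cliqueStep_mul_of_absorbing hs]
    rcases hs with rfl | hns
    · simp
    · simp [cliqueLyapunov, hns.not_ge]
  obtain ⟨m, rfl⟩ : ∃ m, m + 1 = s := Nat.exists_add_one_eq.2 (by omega)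
  have hmn : m + 1 ≤ n := by omega
  set f : ℕ → ℝ := fun s => ∑ k ∈ Finset.range s, d (k + 1)
  set b := cliqueBirth n lam alpha (m + 1)
  have hf : ∀ s, 0 ≤ f s := fun s => Finset.sum_nonneg fun k _ => hd0 _
  have hb : 0 ≤ b := cliqueBirth_nonneg hlam hmn
  have hs_pos : (0 : ℝ) < (m + 1 : ℕ) := by positivity
  have hc : 0 ≤ c := (mul_nonneg hlam n.cast_nonneg).trans hln
  have hrc : c * ((m + 1 : ℕ) : ℝ) ^ alpha ≤ c :=
    mul_le_of_le_one_right hc (Real.rpow_le_one_of_one_le_of_nonpos (by simp) halpha)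
  have hdrift := birthDeath_drift_le (F := f (m + 1)) hs_pos hb
    (cliqueBirth_le hlam hln (by omega)) hrc (hd0 (m + 2)) (hd (m + 1))
  have hf_succ : f (m + 2) = f (m + 1) + d (m + 2) := Finset.sum_range_succ _ _
  have hf_pred : f (m + 1) - d (m + 1) = f m := by simp [f, Finset.sum_range_succ]
  rw [← hf_succ, hf_pred] at hdrift
  have hdown : cliqueLyapunov n d m = ENNReal.ofReal (f m) := by
    simp [cliqueLyapunov, f, show m ≤ n by omega]
  have hfm := hf m
  have hfm2 := hf (m + 2)
  rw [tsum_cliqueStep_mul (by omega) hmn, if_neg (by omega),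
    ofReal_mul_cliqueLyapunov_succ hlam d hmn, Nat.add_sub_cancel, hdown,
    ← ENNReal.ofReal_mul (by positivity), ← ENNReal.ofReal_add (by positivity) (by positivity),
    ← ENNReal.ofReal_add (by positivity) (by positivity), cliqueLyapunov, if_pos hmn]
  exact ENNReal.ofReal_le_ofReal hdrift

end CliqueChain

theorem clique_sublinear_constant_survival_general (alpha c : ℝ)
    (ha2 : alpha < 0) (hc : 0 < c) :
    ∃ C : ℝ, ∀ (n : ℕ) (lam : ℝ), 1 ≤ n → 0 < lam → lam * n ≤ c →
      cliqueET n lam alpha 1 ≤ ENNReal.ofReal C := by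
  have hr : Tendsto (fun s : ℕ => c * (s : ℝ) ^ alpha) atTop (nhds 0) := by
    simpa using ((tendsto_rpow_neg_atTop (neg_pos.2 ha2)).comp
      tendsto_natCast_atTop_atTop).const_mul c
  obtain ⟨N, hN⟩ := eventually_atTop.mp (hr.eventually (eventually_le_nhds one_half_pos))
  obtain ⟨d, hd0, hd⟩ := exists_nonneg_mul_succ_add_one_le (fun _ => by positivity) N hN
  refine ⟨d 1 * (c + 1), fun n lam hn hlam hln => ?_⟩
  calc cliqueET n lam alpha 1 ≤ cliqueLyapunov n d 1 / ENNReal.ofReal (c + 1)⁻¹ :=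
        tsum_one_sub_markovDist_le_div _ _ (tsum_cliqueStep_eq_one hlam.le) 0 _
          (ENNReal.ofReal_pos.2 (by positivity)).ne' ENNReal.ofReal_ne_top
          (cliqueStep_drift hlam.le ha2.le hln hd0 hd)
    _ = ENNReal.ofReal (d 1 * (c + 1)) := by
        rw [cliqueLyapunov, if_pos hn, ← ENNReal.ofReal_div_of_pos (by positivity),
          div_inv_eq_mul, Finset.sum_range_one]

/-- For sub-linear scaling with λn ≤ c, the expected survival time of
the clique infection chain is bounded by a constant depending only on α and c. -/
theorem clique_sublinear_constant_survival (alpha c : ℝ)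
    (ha1 : -1 < alpha) (ha2 : alpha < 0) (hc : 0 < c) :
    ∃ C : ℝ, ∀ (n : ℕ) (lam : ℝ), 1 ≤ n → 0 < lam → lam * n ≤ c →
      cliqueET n lam alpha 1 ≤ ENNReal.ofReal C :=
  clique_sublinear_constant_survival_general alpha c ha2 hc
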